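/- arXiv:1310.8093 — 5 statements merged into one kernel-verified Lean document; each statement's English description precedes it below -/
import Mathlib

section
/- For the entropy function η_m(ρ,u) = ρ c_λ ∫_{-1}^{1} (u + z ρ^θ)^{2m} (1-z^2)^λ dz with λ > 0, θ > 0, c_λ = (∫_{-1}^1 (1-z^2)^λ dz)^{-1}, there exist positive constants C₁(m), C₂(m) such that C₁(m) ρ (u^{2m} + ρ^{2mθ}) ≤ η_m(ρ,u) ≤ C₂(m) ρ (u^{2m} + ρ^{2mθ}) for all ρ ≥ 0 and u ∈ ℝ. -/
/-!
Write `X = ρ ^ θ`, so that `ρ ^ (2mθ) = X ^ (2m)` and `η_m = ρ c_λ ∫ (u + z X) ^ (2m) w`, with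
the even weight `w z = (1 - z ^ 2) ^ λ`. Since `z ↦ -z` preserves `w`, the integral of
`(u + z X) ^ (2m)` equals that of the average of `(u + z X) ^ (2m)` and `(u - z X) ^ (2m)`, and
this average is at least `(u ^ (2m) + (z X) ^ (2m)) / 2`. Conversely
`(u + z X) ^ (2m) ≤ 2 ^ (2m-1) (u ^ (2m) + (z X) ^ (2m))`. Integrating, `η_m / ρ` is comparable
to `u ^ (2m) + μ X ^ (2m)`, where `μ > 0` is the normalized `2m`-th moment of `w`.
-/

open MeasureTheory intervalIntegral

/-- The entropy `η_m(ρ,u) = ρ c_λ ∫_{-1}^1 (u + z ρ^θ)^{2m} (1-z^2)^λ dz`,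
with `c_λ = (∫_{-1}^1 (1-z^2)^λ dz)⁻¹`. -/
noncomputable def entropyEta (θ lam : ℝ) (m : ℕ) (ρ u : ℝ) : ℝ :=
  ρ * (∫ z in (-1 : ℝ)..1, (1 - z ^ 2) ^ lam)⁻¹ *
    ∫ z in (-1 : ℝ)..1, (u + z * ρ ^ θ) ^ (2 * m) * (1 - z ^ 2) ^ lam

theorem pow_add_pow_le_add_pow_add_sub_pow (a b : ℝ) (m : ℕ) :
    a ^ (2 * m) + b ^ (2 * m) ≤ (a + b) ^ (2 * m) + (a - b) ^ (2 * m) := by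
  rcases m.eq_zero_or_pos with rfl | hm
  · norm_num
  -- `|a| + |b|` is `|a + b|` or `|a - b|`, according to the sign of `a * b`.
  have hsq : (|a| + |b|) ^ 2 = (a + b) ^ 2 ∨ (|a| + |b|) ^ 2 = (a - b) ^ 2 := by
    have hab : (|a| + |b|) ^ 2 = a ^ 2 + 2 * |a * b| + b ^ 2 := by
      rw [abs_mul]; ring_nf; simp only [sq_abs]
    rcases abs_choice (a * b) with h | h <;> rw [hab, h]
    exacts [Or.inl (by ring), Or.inr (by ring)]
  have hsum : (|a| + |b|) ^ (2 * m) ≤ (a + b) ^ (2 * m) + (a - b) ^ (2 * m) := by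
    simp only [pow_mul]
    rcases hsq with h | h <;> rw [h]
    exacts [le_add_of_nonneg_right (by positivity), le_add_of_nonneg_left (by positivity)]
  calc a ^ (2 * m) + b ^ (2 * m) = |a| ^ (2 * m) + |b| ^ (2 * m) := by
        rw [(even_two_mul m).pow_abs, (even_two_mul m).pow_abs]
    _ ≤ (|a| + |b|) ^ (2 * m) := pow_add_pow_le (abs_nonneg a) (abs_nonneg b) (by omega)
    _ ≤ _ := hsum

theorem min_one_mul_add_le_add_mul {a b μ : ℝ} (ha : 0 ≤ a) (hb : 0 ≤ b) :
    min 1 μ * (a + b) ≤ a + μ * b := by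
  nlinarith [min_le_left 1 μ, min_le_right 1 μ]

theorem add_mul_le_max_one_mul_add {a b μ : ℝ} (ha : 0 ≤ a) (hb : 0 ≤ b) :
    a + μ * b ≤ max 1 μ * (a + b) := by
  nlinarith [le_max_left 1 μ, le_max_right 1 μ]

section EvenWeight

variable {w : ℝ → ℝ} {r : ℝ}

theorem integral_comp_neg_mul_of_even (hw : ∀ z, w (-z) = w z) (f : ℝ → ℝ) :
    ∫ z in -r..r, f (-z) * w z = ∫ z in -r..r, f z * w z := by
  simpa [hw] using integral_comp_neg (fun z => f z * w z) (a := -r) (b := r)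

variable (hr : 0 ≤ r) (hw_nonneg : ∀ z ∈ Set.Icc (-r) r, 0 ≤ w z)
  (hw_int : IntervalIntegrable w volume (-r) r)
include hr hw_nonneg hw_int

theorem moments_le_two_mul_integral_add_mul_pow (hw_even : ∀ z, w (-z) = w z)
    (u X : ℝ) (m : ℕ) :
    u ^ (2 * m) * (∫ z in -r..r, w z) + X ^ (2 * m) * ∫ z in -r..r, z ^ (2 * m) * w z ≤
      2 * ∫ z in -r..r, (u + z * X) ^ (2 * m) * w z := by
  have hsym := integral_comp_neg_mul_of_even (r := r) hw_even fun z => (u + z * X) ^ (2 * m)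
  calc u ^ (2 * m) * (∫ z in -r..r, w z) + X ^ (2 * m) * ∫ z in -r..r, z ^ (2 * m) * w z
      = ∫ z in -r..r, (u ^ (2 * m) + (z * X) ^ (2 * m)) * w z := by
        simp only [add_mul, mul_pow]
        rw [integral_add (hw_int.const_mul _) (hw_int.continuousOn_mul (by fun_prop))]
        simp only [← intervalIntegral.integral_const_mul]
        congr 2 with z
        ring
    _ ≤ ∫ z in -r..r, ((u + z * X) ^ (2 * m) + (u + -z * X) ^ (2 * m)) * w z := by
        refine integral_mono_on (by linarith) (hw_int.continuousOn_mul (by fun_prop))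
          (hw_int.continuousOn_mul (by fun_prop)) fun z hz =>
            mul_le_mul_of_nonneg_right ?_ (hw_nonneg z hz)
        simpa [neg_mul, ← sub_eq_add_neg] using pow_add_pow_le_add_pow_add_sub_pow u (z * X) m
    _ = 2 * ∫ z in -r..r, (u + z * X) ^ (2 * m) * w z := by
        simp only [add_mul]
        rw [integral_add (hw_int.continuousOn_mul (by fun_prop))
          (hw_int.continuousOn_mul (by fun_prop)), hsym]
        ring

theorem integral_add_mul_pow_le_moments (u X : ℝ) (m : ℕ) :
    ∫ z in -r..r, (u + z * X) ^ (2 * m) * w z ≤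
      2 ^ (2 * m - 1) * (u ^ (2 * m) * (∫ z in -r..r, w z) +
        X ^ (2 * m) * ∫ z in -r..r, z ^ (2 * m) * w z) := by
  calc ∫ z in -r..r, (u + z * X) ^ (2 * m) * w z
      ≤ ∫ z in -r..r, 2 ^ (2 * m - 1) * (u ^ (2 * m) + (z * X) ^ (2 * m)) * w z :=
        integral_mono_on (by linarith) (hw_int.continuousOn_mul (by fun_prop))
          (hw_int.continuousOn_mul (by fun_prop)) fun z hz =>
            mul_le_mul_of_nonneg_right (even_two_mul m).add_pow_le (hw_nonneg z hz)
    _ = _ := by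
        simp only [mul_add, add_mul, mul_pow]
        rw [integral_add (hw_int.continuousOn_mul (by fun_prop))
          (hw_int.continuousOn_mul (by fun_prop))]
        simp only [← intervalIntegral.integral_const_mul]
        congr 2 with z <;> ring

theorem exists_integral_add_mul_pow_comparison (hw_even : ∀ z, w (-z) = w z) (m : ℕ)
    (hI : 0 < ∫ z in -r..r, w z) (hM : 0 < ∫ z in -r..r, z ^ (2 * m) * w z) :
    ∃ C₁ C₂ : ℝ, 0 < C₁ ∧ 0 < C₂ ∧ ∀ u X : ℝ,
      C₁ * (u ^ (2 * m) + X ^ (2 * m)) ≤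
          (∫ z in -r..r, w z)⁻¹ * ∫ z in -r..r, (u + z * X) ^ (2 * m) * w z ∧
        (∫ z in -r..r, w z)⁻¹ * ∫ z in -r..r, (u + z * X) ^ (2 * m) * w z ≤
          C₂ * (u ^ (2 * m) + X ^ (2 * m)) := by
  set I := ∫ z in -r..r, w z
  set μ := (∫ z in -r..r, z ^ (2 * m) * w z) / I
  refine ⟨min 1 μ / 2, 2 ^ (2 * m - 1) * max 1 μ, by positivity, by positivity, fun u X => ?_⟩
  have hmean : u ^ (2 * m) + μ * X ^ (2 * m) =
      I⁻¹ * (u ^ (2 * m) * I + X ^ (2 * m) * ∫ z in -r..r, z ^ (2 * m) * w z) := by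
    simp only [μ]
    field_simp
  have hu : 0 ≤ u ^ (2 * m) := (even_two_mul m).pow_nonneg u
  have hX : 0 ≤ X ^ (2 * m) := (even_two_mul m).pow_nonneg X
  constructor
  · calc min 1 μ / 2 * (u ^ (2 * m) + X ^ (2 * m))
        ≤ (u ^ (2 * m) + μ * X ^ (2 * m)) / 2 := by
          rw [div_mul_eq_mul_div]
          gcongr
          exact min_one_mul_add_le_add_mul hu hX
      _ ≤ _ := by
          rw [hmean, mul_div_assoc]
          gcongr
          linarith [moments_le_two_mul_integral_add_mul_pow hr hw_nonneg hw_int hw_even u X m]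
  · calc I⁻¹ * ∫ z in -r..r, (u + z * X) ^ (2 * m) * w z
        ≤ 2 ^ (2 * m - 1) * (u ^ (2 * m) + μ * X ^ (2 * m)) := by
          rw [hmean, mul_left_comm]
          gcongr
          exact integral_add_mul_pow_le_moments hr hw_nonneg hw_int u X m
      _ ≤ 2 ^ (2 * m - 1) * max 1 μ * (u ^ (2 * m) + X ^ (2 * m)) := by
          rw [mul_assoc]
          gcongr
          exact add_mul_le_max_one_mul_add hu hX

end EvenWeight

theorem continuous_one_sub_sq_rpow {lam : ℝ} (hlam : 0 ≤ lam) :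
    Continuous fun z : ℝ => (1 - z ^ 2) ^ lam :=
  (continuous_const.sub (continuous_pow 2)).rpow_const fun _ => Or.inr hlam

theorem integral_pow_mul_one_sub_sq_rpow_pos {lam : ℝ} (hlam : 0 ≤ lam) (k : ℕ) :
    0 < ∫ z in (-1 : ℝ)..1, z ^ (2 * k) * (1 - z ^ 2) ^ lam := by
  refine integral_pos (by norm_num) ?_ (fun z hz => ?_) ⟨1 / 2, by norm_num, by positivity⟩
  · exact ((continuous_pow _).mul (continuous_one_sub_sq_rpow hlam)).continuousOn
  · exact mul_nonneg ((even_two_mul k).pow_nonneg z)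
      (Real.rpow_nonneg (by nlinarith [hz.1, hz.2]) _)

theorem stmt0_general (θ lam : ℝ) (hlam : 0 < lam) (m : ℕ) :
    ∃ C₁ C₂ : ℝ, 0 < C₁ ∧ 0 < C₂ ∧ ∀ ρ u : ℝ, 0 ≤ ρ →
      C₁ * (ρ * (u ^ (2 * m) + ρ ^ (2 * (m : ℝ) * θ))) ≤ entropyEta θ lam m ρ u ∧
      entropyEta θ lam m ρ u ≤ C₂ * (ρ * (u ^ (2 * m) + ρ ^ (2 * (m : ℝ) * θ))) := by
  have hw_int : IntervalIntegrable (fun z : ℝ => (1 - z ^ 2) ^ lam) volume (-1) 1 :=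
    (continuous_one_sub_sq_rpow hlam.le).intervalIntegrable _ _
  obtain ⟨C₁, C₂, hC₁, hC₂, hC⟩ := exists_integral_add_mul_pow_comparison zero_le_one
    (fun z hz => Real.rpow_nonneg (by nlinarith [hz.1, hz.2]) _) hw_int (by simp) m
    (by simpa using integral_pow_mul_one_sub_sq_rpow_pos hlam.le 0)
    (integral_pow_mul_one_sub_sq_rpow_pos hlam.le m)
  refine ⟨C₁, C₂, hC₁, hC₂, fun ρ u hρ => ?_⟩
  have hpow : ρ ^ (2 * (m : ℝ) * θ) = (ρ ^ θ) ^ (2 * m) := by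
    rw [← Real.rpow_natCast, ← Real.rpow_mul hρ]
    push_cast
    ring_nf
  obtain ⟨hlower, hupper⟩ := hC u (ρ ^ θ)
  rw [entropyEta, hpow, mul_assoc ρ, mul_left_comm C₁, mul_left_comm C₂]
  exact ⟨mul_le_mul_of_nonneg_left hlower hρ, mul_le_mul_of_nonneg_left hupper hρ⟩

/-- Two-sided comparison `η_m(ρ,u) ≍ ρ (u^{2m} + ρ^{2mθ})`. -/
theorem stmt0 (θ lam : ℝ) (hθ : 0 < θ) (hlam : 0 < lam) (m : ℕ) :
    ∃ C₁ C₂ : ℝ, 0 < C₁ ∧ 0 < C₂ ∧ ∀ ρ u : ℝ, 0 ≤ ρ →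
      C₁ * (ρ * (u ^ (2 * m) + ρ ^ (2 * (m : ℝ) * θ))) ≤ entropyEta θ lam m ρ u ∧
      entropyEta θ lam m ρ u ≤ C₂ * (ρ * (u ^ (2 * m) + ρ ^ (2 * (m : ℝ) * θ))) :=
  stmt0_general θ lam hlam m
end

section
/- Let m ∈ ℕ, θ > 0, and p a real number with p ≥ m + 1/(2θ). Then there is a constant C(m,p,θ) such that ρ² (u^{2m} + ρ^{2mθ}) ≤ C(m,p,θ) [ρ(u^{2m} + ρ^{2mθ}) + ρ(u^{2p} + ρ^{2pθ})] for all ρ ≥ 0, u ∈ ℝ. -/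
/-!
For `ρ ≤ 1` the left side is at most the first term on the right. For `ρ ≥ 1`, the condition
`p ≥ m + 1/(2θ)` gives `ρ^{1 + 2mθ} ≤ ρ^{2pθ}` and `p/(p - m) ≤ 2pθ`, and splitting according
to whether `ρ ≤ |u|^{2(p-m)}` gives `ρ u^{2m} ≤ |u|^{2p} + ρ^{p/(p-m)}` (a form of Young's
inequality with exponents `p/m`, `p/(p-m)`). Hence `ρ (u^{2m} + ρ^{2mθ}) ≤ 2 (|u|^{2p} + ρ^{2pθ})`,
and `C = 2` works.
-/

open Real

lemma mul_rpow_le_rpow_add_rpow {a b s t : ℝ} (ha : 0 ≤ a) (hb : 0 ≤ b) (hs : 0 ≤ s)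
    (hst : s < t) : b * a ^ s ≤ a ^ t + b ^ (t / (t - s)) := by
  have hts : 0 < t - s := sub_pos.mpr hst
  rcases le_or_gt b (a ^ (t - s)) with hba | hab
  · rcases ha.eq_or_lt with rfl | ha0
    · rw [zero_rpow hts.ne'] at hba
      rw [le_antisymm hba hb, zero_mul]
      positivity
    calc b * a ^ s ≤ a ^ (t - s) * a ^ s := by gcongr
      _ = a ^ t := by rw [← rpow_add ha0, sub_add_cancel]
      _ ≤ a ^ t + b ^ (t / (t - s)) := le_add_of_nonneg_right (by positivity)
  · have hb0 : 0 < b := (rpow_nonneg ha _).trans_lt hab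
    have has : a ^ s ≤ b ^ (s / (t - s)) := by
      calc a ^ s = (a ^ (t - s)) ^ (s / (t - s)) := by
            rw [← rpow_mul ha, mul_div_cancel₀ _ hts.ne']
        _ ≤ b ^ (s / (t - s)) := by gcongr
    calc b * a ^ s ≤ b * b ^ (s / (t - s)) := by gcongr
      _ = b ^ (t / (t - s)) := by
        rw [← rpow_one_add' hb0.le (by positivity), one_add_div hts.ne', sub_add_cancel]
      _ ≤ a ^ t + b ^ (t / (t - s)) := le_add_of_nonneg_left (by positivity)

section

variable {θ p : ℝ} {m : ℕ}

lemma one_le_two_mul_mul_sub (hθ : 0 < θ) (hp : (m : ℝ) + 1 / (2 * θ) ≤ p) :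
    1 ≤ 2 * θ * (p - m) := by
  rw [← div_le_iff₀' (by positivity)]
  linarith

lemma mul_pow_add_rpow_le_of_one_le (hθ : 0 < θ) (hp : (m : ℝ) + 1 / (2 * θ) ≤ p) {ρ : ℝ}
    (hρ : 1 ≤ ρ) (u : ℝ) :
    ρ * (u ^ (2 * m) + ρ ^ (2 * (m : ℝ) * θ)) ≤ 2 * (|u| ^ (2 * p) + ρ ^ (2 * p * θ)) := by
  have hgap := one_le_two_mul_mul_sub hθ hp
  have hmp : (m : ℝ) < p := by nlinarith
  have hp0 : 0 < p := (Nat.cast_nonneg m).trans_lt hmp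
  have hu : ρ * u ^ (2 * m) ≤ |u| ^ (2 * p) + ρ ^ (2 * p * θ) := by
    have hyoung := mul_rpow_le_rpow_add_rpow (abs_nonneg u) (zero_le_one.trans hρ)
      (by positivity : (0 : ℝ) ≤ 2 * m) (by linarith : 2 * (m : ℝ) < 2 * p)
    have hexp : 2 * p / (2 * p - 2 * m) ≤ 2 * p * θ := by
      rw [div_le_iff₀ (by linarith)]
      nlinarith
    calc ρ * u ^ (2 * m) = ρ * |u| ^ (2 * (m : ℝ)) := by
          rw [← (even_two_mul m).pow_abs, ← rpow_natCast]
          push_cast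
          rfl
      _ ≤ |u| ^ (2 * p) + ρ ^ (2 * p / (2 * p - 2 * m)) := hyoung
      _ ≤ |u| ^ (2 * p) + ρ ^ (2 * p * θ) := by gcongr
  have hρ' : ρ * ρ ^ (2 * (m : ℝ) * θ) ≤ ρ ^ (2 * p * θ) := by
    rw [← rpow_one_add' (zero_le_one.trans hρ) (by positivity)]
    exact rpow_le_rpow_of_exponent_le hρ (by nlinarith)
  have : 0 ≤ |u| ^ (2 * p) := by positivity
  linarith

end

/-- `ρ² (u^{2m} + ρ^{2mθ}) ≤ C [ρ(u^{2m} + ρ^{2mθ}) + ρ(u^{2p} + ρ^{2pθ})]`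
for `p ≥ m + 1/(2θ)`. -/
theorem stmt2 (θ : ℝ) (hθ : 0 < θ) (m : ℕ) (p : ℝ) (hp : (m : ℝ) + 1 / (2 * θ) ≤ p) :
    ∃ C : ℝ, 0 < C ∧ ∀ ρ u : ℝ, 0 ≤ ρ →
      ρ ^ 2 * (u ^ (2 * m) + ρ ^ (2 * (m : ℝ) * θ)) ≤
        C * (ρ * (u ^ (2 * m) + ρ ^ (2 * (m : ℝ) * θ)) +
             ρ * (|u| ^ (2 * p) + ρ ^ (2 * p * θ))) := by
  refine ⟨2, two_pos, fun ρ u hρ => ?_⟩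
  have hA : 0 ≤ u ^ (2 * m) + ρ ^ (2 * (m : ℝ) * θ) := by
    have := (even_two_mul m).pow_nonneg u
    positivity
  have hB : 0 ≤ |u| ^ (2 * p) + ρ ^ (2 * p * θ) := by positivity
  rcases le_or_gt ρ 1 with hρ1 | hρ1
  · have : ρ ^ 2 * (u ^ (2 * m) + ρ ^ (2 * (m : ℝ) * θ))
        ≤ ρ * (u ^ (2 * m) + ρ ^ (2 * (m : ℝ) * θ)) := by
      rw [sq, mul_assoc]
      exact mul_le_of_le_one_left (by positivity) hρ1
    nlinarith [mul_nonneg hρ hA, mul_nonneg hρ hB]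
  · have := mul_le_mul_of_nonneg_left (mul_pow_add_rpow_le_of_one_le hθ hp hρ1.le u) hρ
    nlinarith [mul_nonneg hρ hA]
end

section
/- Let m ∈ ℕ, s > 1, θ > 0, and p ≥ ms + (s-1)/(2θ). Then there is a constant C such that (ρ^s |u|^{2ms} + ρ^{s + 2mθ s}) ≤ C [ρ(1 + u^{2p} + ρ^{2pθ})] for all ρ ≥ 0, u ∈ ℝ. In particular |η_m(ρ,u)|^s ≤ C(η_0(ρ,u) + η_p(ρ,u)) where η_0(ρ,u) = ρ. -/
/-!
After dividing by `ρ` the two terms become `ρ^(s-1) |u|^(2ms)` and `ρ^(s-1+2mθs)`. The second is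
at most `1 + ρ^(2pθ)` since its exponent lies in `[0, 2pθ]`. For the first, with `λ = ms/p`,
weighted AM-GM gives `ρ^(s-1) |u|^(2ms) ≤ ρ^((s-1)/(1-λ)) + |u|^(2p)`, and the hypothesis on `p`
is exactly `(s-1)/(1-λ) ≤ 2pθ`.
-/

open Real

lemma rpow_le_one_add_rpow {ρ a b : ℝ} (hρ : 0 ≤ ρ) (ha : 0 ≤ a) (hab : a ≤ b) :
    ρ ^ a ≤ 1 + ρ ^ b := by
  rcases le_or_gt ρ 1 with h | h
  · linarith [rpow_le_one hρ h ha, rpow_nonneg hρ b]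
  · linarith [rpow_le_rpow_of_exponent_le h.le hab]

lemma rpow_mul_rpow_le_add {x y a b : ℝ} (hx : 0 ≤ x) (hy : 0 ≤ y) (ha : 0 ≤ a) (hb : 0 ≤ b)
    (hab : a + b = 1) : x ^ a * y ^ b ≤ x + y := by
  have ha1 : a ≤ 1 := by linarith
  have hb1 : b ≤ 1 := by linarith
  calc x ^ a * y ^ b ≤ a * x + b * y := geom_mean_le_arith_mean2_weighted ha hb hx hy hab
    _ ≤ x + y := by nlinarith

lemma rpow_sub_one_mul_rpow_le {θ s k p ρ v : ℝ} (hθ : 0 < θ) (hs : 1 < s) (hk : 0 ≤ k)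
    (hp : s - 1 ≤ 2 * θ * (p - k * s)) (hρ : 0 ≤ ρ) (hv : 0 ≤ v) :
    ρ ^ (s - 1) * v ^ (2 * k * s) ≤ 1 + v ^ (2 * p) + ρ ^ (2 * p * θ) := by
  have hgap : 0 < p - k * s := pos_of_mul_pos_right (by linarith) (by positivity : 0 ≤ 2 * θ)
  have hp0 : 0 < p := by nlinarith
  -- `c = (s - 1) / (1 - λ)` for the AM-GM weight `λ = ks/p`
  obtain ⟨c, hc_eq⟩ : ∃ c, c * (p - k * s) = (s - 1) * p := ⟨_, div_mul_cancel₀ _ hgap.ne'⟩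
  have hρ_pow : ρ ^ (s - 1) = (ρ ^ c) ^ ((p - k * s) / p) := by
    rw [← rpow_mul hρ]; congr 1; field_simp; linarith
  have hv_pow : v ^ (2 * k * s) = (v ^ (2 * p)) ^ (k * s / p) := by
    rw [← rpow_mul hv]; congr 1; field_simp
  have hc : c ≤ 2 * p * θ := by
    refine le_of_mul_le_mul_right ?_ hgap; nlinarith
  calc ρ ^ (s - 1) * v ^ (2 * k * s)
      ≤ ρ ^ c + v ^ (2 * p) := by
        rw [hρ_pow, hv_pow]
        exact rpow_mul_rpow_le_add (by positivity) (by positivity) (div_nonneg hgap.le hp0.le)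
          (by positivity) (by field_simp; ring)
    _ ≤ 1 + ρ ^ (2 * p * θ) + v ^ (2 * p) := by
        gcongr; exact rpow_le_one_add_rpow hρ (by nlinarith) hc
    _ = 1 + v ^ (2 * p) + ρ ^ (2 * p * θ) := by ring

/-- `ρ^s |u|^{2ms} + ρ^{s + 2mθs} ≤ C ρ(1 + |u|^{2p} + ρ^{2pθ})` for
`p ≥ ms + (s-1)/(2θ)`, `s > 1`.  In particular `|η_m|^s ≤ C(η_0 + η_p)`. -/
theorem stmt3 (θ s p : ℝ) (m : ℕ) (hθ : 0 < θ) (hs : 1 < s)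
    (hp : (m : ℝ) * s + (s - 1) / (2 * θ) ≤ p) :
    ∃ C : ℝ, 0 < C ∧ ∀ ρ u : ℝ, 0 ≤ ρ →
      ρ ^ s * |u| ^ (2 * (m : ℝ) * s) + ρ ^ (s + 2 * (m : ℝ) * θ * s) ≤
        C * (ρ * (1 + |u| ^ (2 * p) + ρ ^ (2 * p * θ))) := by
  refine ⟨2, two_pos, fun ρ u hρ => ?_⟩
  have hm : (0 : ℝ) ≤ m := m.cast_nonneg
  have hmθs : 0 ≤ 2 * (m : ℝ) * θ * s := by positivity
  have hp' : s - 1 ≤ 2 * θ * (p - m * s) := by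
    rw [← div_le_iff₀' (by positivity)]; linarith
  have hfirst := rpow_sub_one_mul_rpow_le hθ hs hm hp' hρ (abs_nonneg u)
  have hsecond : ρ ^ (s + 2 * (m : ℝ) * θ * s - 1) ≤ 1 + ρ ^ (2 * p * θ) :=
    rpow_le_one_add_rpow hρ (by linarith) (by linarith)
  have hsplit : ∀ e : ℝ, 0 < e → ρ ^ e = ρ * ρ ^ (e - 1) := fun e he => by
    rw [← rpow_one_add' hρ (by linarith)]; ring_nf
  rw [hsplit s (by linarith), hsplit (s + _) (by linarith)]
  have hv : 0 ≤ |u| ^ (2 * p) := by positivity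
  nlinarith [mul_le_mul_of_nonneg_left hfirst hρ, mul_le_mul_of_nonneg_left hsecond hρ,
    mul_nonneg hρ hv]
end

section
/- Let r ≥ 1, Q compact with probability measure λ, E ⊂ ℝ^m closed. Let ν be a random Young measure on a probability space (Ω,P) and ν̃ a random Young measure on (Ω̃,P̃) having the same law as ν. If ν is an L^r-random Dirac mass (i.e. there is u ∈ L^r(Ω×Q;E) with ν = δ_{u(z)} ⊗ λ almost surely), then ν̃ is also an L^r-random Dirac mass. -/
open MeasureTheory ProbabilityTheory
open scoped ENNReal

/-!
Being a graph measure `λ.map (z ↦ (z, u z))` is a measurable property of a Young measure, so it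
passes along equality of laws. Disintegrating the evaluation kernel `P(Q × X) → Q × X` gives a
kernel `(μ, z) ↦ μ_z` that is jointly measurable in `μ`. If `φ : X → ℝ` has a measurable left
inverse `ψ`, then a Young measure `μ` is a graph measure iff the `λ`-integrated variance of `φ`
under `μ_z` vanishes (this replaces the paper's strictly convex function and the equality case of
Jensen), and that quantity is a measurable functional of `μ`. When it vanishes, the graph
map is recovered measurably as `z ↦ ψ (∫ φ dμ_z)`. The `L^r` bound is the expectation of the
measurable functional `μ ↦ ∫ ‖y‖^r dμ`, which is also law-invariant.
-/

/-- `ν` is an `L^r`-random Dirac mass: there is `u ∈ L^r(Ω×Q; E)` with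
`ν_ω = δ_{u(ω,z)} ⊗ λ` almost surely, the joint measure on `Q × E` being the
pushforward of `λ` under `z ↦ (z, u(ω,z))`. -/
def IsLrRandomDiracMass {m : ℕ} {Q : Type*} [MeasurableSpace Q]
    (E : Set (EuclideanSpace ℝ (Fin m))) (lam : Measure Q) (r : ℝ)
    {Ω : Type*} [MeasurableSpace Ω] (P : Measure Ω)
    (ν : Ω → ProbabilityMeasure (Q × ↥E)) : Prop :=
  ∃ u : Ω → Q → ↥E,
    Measurable (fun p : Ω × Q => u p.1 p.2) ∧
    (∫⁻ ω, ∫⁻ z, ENNReal.ofReal (‖(u ω z : EuclideanSpace ℝ (Fin m))‖ ^ r) ∂lam ∂P) < ⊤ ∧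
    ∀ᵐ ω ∂P, ((ν ω : Measure (Q × ↥E))) = lam.map (fun z => (z, u ω z))

lemma exists_measurable_leftInverse_real (X : Type*) [MeasurableSpace X] [StandardBorelSpace X]
    [Nonempty X] :
    ∃ (φ : X → ℝ) (ψ : ℝ → X), Measurable φ ∧ Measurable ψ ∧ Function.LeftInverse ψ φ := by
  obtain ⟨ψ, hψ, hψφ⟩ := (measurableEmbedding_embeddingReal X).exists_measurable_extend
    measurable_id fun _ => inferInstance
  exact ⟨embeddingReal X, ψ, measurable_embeddingReal X, hψ, congrFun hψφ⟩

lemma ae_of_map_eq_map {α Ω Ω' : Type*} [MeasurableSpace α] [MeasurableSpace Ω]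
    [MeasurableSpace Ω'] {P : Measure Ω} {P' : Measure Ω'} {X : Ω → α} {X' : Ω' → α}
    (hX : Measurable X) (hX' : Measurable X') (hlaw : P.map X = P'.map X') {p : α → Prop}
    (hp : MeasurableSet {a | p a}) (h : ∀ᵐ ω ∂P, p (X ω)) : ∀ᵐ ω' ∂P', p (X' ω') := by
  rw [← ae_map_iff hX'.aemeasurable hp, ← hlaw]
  exact (ae_map_iff hX.aemeasurable hp).mpr h

lemma MeasureTheory.Measure.eq_dirac_of_evariance_eq_zero {X : Type*} [MeasurableSpace X]
    {μ : Measure X} [IsProbabilityMeasure μ] {φ : X → ℝ} {ψ : ℝ → X} (hφ : Measurable φ)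
    (hψ : Measurable ψ) (hψφ : Function.LeftInverse ψ φ) (h : evariance φ μ = 0) :
    μ = Measure.dirac (ψ μ[φ]) := by
  have hconst : φ =ᵐ[μ] fun _ => μ[φ] := (evariance_eq_zero_iff hφ.aemeasurable).mp h
  calc μ = μ.map (ψ ∘ φ) := by rw [hψφ.comp_eq_id, Measure.map_id]
    _ = (μ.map φ).map ψ := (Measure.map_map hψ hφ).symm
    _ = (Measure.dirac μ[φ]).map ψ := by
      rw [Measure.map_congr hconst, Measure.map_const, measure_univ, one_smul]
    _ = Measure.dirac (ψ μ[φ]) := Measure.map_dirac' hψ _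

lemma ProbabilityTheory.Kernel.measurable_evariance {α β : Type*} [MeasurableSpace α]
    [MeasurableSpace β] (κ : Kernel α β) [IsSFiniteKernel κ] {φ : β → ℝ} (hφ : Measurable φ) :
    Measurable fun a => evariance φ (κ a) := by
  have hmean : Measurable fun a => (κ a)[φ] :=
    (hφ.stronglyMeasurable.integral_kernel (κ := κ)).measurable
  exact (((hφ.comp measurable_snd).sub (hmean.comp measurable_fst)).enorm.pow_const 2)
    |>.lintegral_kernel_prod_right'

namespace MeasureTheory.ProbabilityMeasure

variable (X : Type*) [TopologicalSpace X] [MeasurableSpace X] [BorelSpace X]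
  [HasOuterApproxClosed X] [MeasurableSpace (ProbabilityMeasure X)]
  [BorelSpace (ProbabilityMeasure X)]

lemma measurable_toMeasure_of_borelSpace :
    Measurable (fun μ : ProbabilityMeasure X => (μ : Measure X)) := by
  refine .measure_of_isPiSystem_of_isProbabilityMeasure BorelSpace.measurable_eq isPiSystem_isOpen
    fun U hU => LowerSemicontinuous.measurable ?_
  rw [lowerSemicontinuous_iff_le_liminf]
  exact fun μ => le_liminf_measure_open_of_tendsto Filter.tendsto_id hU

noncomputable def evalKernel : Kernel (ProbabilityMeasure X) X :=
  ⟨fun μ => μ, measurable_toMeasure_of_borelSpace X⟩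

instance : IsMarkovKernel (evalKernel X) := ⟨fun μ => μ.2⟩

lemma evalKernel_apply (μ : ProbabilityMeasure X) : evalKernel X μ = μ := rfl

end MeasureTheory.ProbabilityMeasure

section YoungMeasure

variable {Q X : Type*} [TopologicalSpace Q] [TopologicalSpace.PseudoMetrizableSpace Q]
  [MeasurableSpace Q] [BorelSpace Q] [TopologicalSpace X]
  [TopologicalSpace.PseudoMetrizableSpace X] [SecondCountableTopology X] [MeasurableSpace X]
  [BorelSpace X] [MeasurableSpace (ProbabilityMeasure (Q × X))]
  [BorelSpace (ProbabilityMeasure (Q × X))]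
  {lam : Measure Q} {Ω Ω' : Type*} [MeasurableSpace Ω] [MeasurableSpace Ω'] {P : Measure Ω}
  {P' : Measure Ω'} {ν : Ω → ProbabilityMeasure (Q × X)} {ν' : Ω' → ProbabilityMeasure (Q × X)}

lemma lintegral_lintegral_eq_of_map_eq (hν : Measurable ν) (hν' : Measurable ν')
    (hlaw : P.map ν = P'.map ν') {g : X → ℝ≥0∞} (hg : Measurable g)
    {u : Ω → Q → X} (hu : Measurable fun p : Ω × Q => u p.1 p.2)
    (hνu : ∀ᵐ ω ∂P, (ν ω : Measure (Q × X)) = lam.map (fun z => (z, u ω z)))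
    {u' : Ω' → Q → X} (hu' : Measurable fun p : Ω' × Q => u' p.1 p.2)
    (hν'u' : ∀ᵐ ω' ∂P', (ν' ω' : Measure (Q × X)) = lam.map (fun z => (z, u' ω' z))) :
    ∫⁻ ω', ∫⁻ z, g (u' ω' z) ∂lam ∂P' = ∫⁻ ω, ∫⁻ z, g (u ω z) ∂lam ∂P := by
  set G : ProbabilityMeasure (Q × X) → ℝ≥0∞ := fun μ => ∫⁻ p, g p.2 ∂(μ : Measure (Q × X))
  have hG : Measurable G := (Measure.measurable_lintegral (hg.comp measurable_snd)).comp
    (ProbabilityMeasure.measurable_toMeasure_of_borelSpace _)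
  have hG_graph : ∀ {w : Q → X}, Measurable w → ∀ μ : ProbabilityMeasure (Q × X),
      (μ : Measure (Q × X)) = lam.map (fun z => (z, w z)) →
      ∫⁻ p, g p.2 ∂(μ : Measure (Q × X)) = ∫⁻ z, g (w z) ∂lam :=
    fun hw μ hμ => by rw [hμ, lintegral_map (by fun_prop) (by fun_prop)]
  calc ∫⁻ ω', ∫⁻ z, g (u' ω' z) ∂lam ∂P' = ∫⁻ ω', G (ν' ω') ∂P' := by
        refine lintegral_congr_ae ?_
        filter_upwards [hν'u'] with ω' hω'
        exact (hG_graph (hu'.comp measurable_prodMk_left) _ hω').symm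
    _ = ∫⁻ ω, G (ν ω) ∂P := by
        rw [← lintegral_map hG hν', ← hlaw, lintegral_map hG hν]
    _ = ∫⁻ ω, ∫⁻ z, g (u ω z) ∂lam ∂P := by
        refine lintegral_congr_ae ?_
        filter_upwards [hνu] with ω hω
        exact hG_graph (hu.comp measurable_prodMk_left) _ hω

variable [SecondCountableTopology Q] [StandardBorelSpace X] [Nonempty X]

variable (Q X) in
/-- The disintegration `(μ, z) ↦ μ_z` of all measures on `Q × X` at once, so that it is
measurable in `μ` as well. -/
noncomputable def youngDisintegration : Kernel (ProbabilityMeasure (Q × X) × Q) X :=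
  (ProbabilityMeasure.evalKernel (Q × X)).condKernel

instance : IsMarkovKernel (youngDisintegration Q X) := by
  unfold youngDisintegration; infer_instance

lemma compProd_youngDisintegration {μ : ProbabilityMeasure (Q × X)}
    (hμ : (μ : Measure (Q × X)).map Prod.fst = lam) :
    lam ⊗ₘ (youngDisintegration Q X).sectR μ = μ := by
  have h := congr($((ProbabilityMeasure.evalKernel (Q × X)).disintegrate
    (ProbabilityMeasure.evalKernel (Q × X)).condKernel) μ)
  rwa [Kernel.compProd_apply_eq_compProd_sectR, Kernel.fst_apply,
    ProbabilityMeasure.evalKernel_apply, hμ] at h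

lemma youngDisintegration_ae_eq_dirac [IsFiniteMeasure lam] {μ : ProbabilityMeasure (Q × X)}
    {w : Q → X} (hw : Measurable w) (hμ : (μ : Measure (Q × X)) = lam.map (fun z => (z, w z))) :
    ∀ᵐ z ∂lam, youngDisintegration Q X (μ, z) = Measure.dirac (w z) := by
  have hgraph : (μ : Measure (Q × X)) = lam ⊗ₘ Kernel.deterministic w hw :=
    hμ.trans (Measure.compProd_deterministic hw).symm
  have hfst : (μ : Measure (Q × X)).map Prod.fst = lam := by
    rw [hgraph]; exact Measure.fst_compProd _ _
  exact Kernel.ae_eq_of_compProd_eq ((compProd_youngDisintegration hfst).trans hgraph)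

variable (Q lam) in
noncomputable def diracDefect (φ : X → ℝ) (μ : ProbabilityMeasure (Q × X)) : ℝ≥0∞ :=
  ∫⁻ z, evariance φ (youngDisintegration Q X (μ, z)) ∂lam

variable (lam) in
lemma measurable_diracDefect [SFinite lam] {φ : X → ℝ} (hφ : Measurable φ) :
    Measurable (diracDefect Q lam φ) :=
  ((youngDisintegration Q X).measurable_evariance hφ).lintegral_prod_right'

lemma diracDefect_eq_zero_of_eq_map_graph [IsFiniteMeasure lam] (φ : X → ℝ)
    {μ : ProbabilityMeasure (Q × X)} {w : Q → X} (hw : Measurable w)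
    (hμ : (μ : Measure (Q × X)) = lam.map (fun z => (z, w z))) :
    diracDefect Q lam φ μ = 0 := by
  refine (lintegral_congr_ae ?_).trans lintegral_zero
  filter_upwards [youngDisintegration_ae_eq_dirac hw hμ] with z hz
  simp [hz, evariance]

variable (Q) in
noncomputable def youngSelection (φ : X → ℝ) (ψ : ℝ → X) (q : ProbabilityMeasure (Q × X) × Q) :
    X :=
  ψ (youngDisintegration Q X q)[φ]

lemma measurable_youngSelection {φ : X → ℝ} {ψ : ℝ → X} (hφ : Measurable φ)
    (hψ : Measurable ψ) : Measurable (youngSelection Q φ ψ) :=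
  hψ.comp (hφ.stronglyMeasurable.integral_kernel (κ := youngDisintegration Q X)).measurable

lemma eq_map_graph_of_diracDefect_eq_zero [SFinite lam] {φ : X → ℝ} {ψ : ℝ → X}
    (hφ : Measurable φ) (hψ : Measurable ψ) (hψφ : Function.LeftInverse ψ φ)
    {μ : ProbabilityMeasure (Q × X)} (hμ : (μ : Measure (Q × X)).map Prod.fst = lam)
    (h : diracDefect Q lam φ μ = 0) :
    (μ : Measure (Q × X)) = lam.map (fun z => (z, youngSelection Q φ ψ (μ, z))) := by
  have hdirac : ∀ᵐ z ∂lam, evariance φ (youngDisintegration Q X (μ, z)) = 0 :=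
    (lintegral_eq_zero_iff
      (((youngDisintegration Q X).measurable_evariance hφ).comp measurable_prodMk_left)).mp h
  have hsel : Measurable fun z => youngSelection Q φ ψ (μ, z) :=
    (measurable_youngSelection hφ hψ).comp measurable_prodMk_left
  rw [← compProd_youngDisintegration hμ, ← Measure.compProd_deterministic hsel]
  refine Measure.compProd_congr ?_
  filter_upwards [hdirac] with z hz
  exact Measure.eq_dirac_of_evariance_eq_zero hφ hψ hψφ hz

theorem exists_graph_of_map_eq [IsFiniteMeasure lam] (hν : Measurable ν) (hν' : Measurable ν')
    (hYoung' : ∀ ω', (ν' ω' : Measure (Q × X)).map Prod.fst = lam) (hlaw : P.map ν = P'.map ν')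
    {u : Ω → Q → X} (hu : Measurable fun p : Ω × Q => u p.1 p.2)
    (hνu : ∀ᵐ ω ∂P, (ν ω : Measure (Q × X)) = lam.map (fun z => (z, u ω z))) :
    ∃ u' : Ω' → Q → X, Measurable (fun p : Ω' × Q => u' p.1 p.2) ∧
      ∀ᵐ ω' ∂P', (ν' ω' : Measure (Q × X)) = lam.map (fun z => (z, u' ω' z)) := by
  obtain ⟨φ, ψ, hφ, hψ, hψφ⟩ := exists_measurable_leftInverse_real X
  have hdefect : ∀ᵐ ω ∂P, diracDefect Q lam φ (ν ω) = 0 := by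
    filter_upwards [hνu] with ω hω
    exact diracDefect_eq_zero_of_eq_map_graph φ (hu.comp measurable_prodMk_left) hω
  have hdefect' : ∀ᵐ ω' ∂P', diracDefect Q lam φ (ν' ω') = 0 :=
    ae_of_map_eq_map hν hν' hlaw (measurable_diracDefect lam hφ (measurableSet_singleton 0))
      hdefect
  refine ⟨fun ω' z => youngSelection Q φ ψ (ν' ω', z), ?_, ?_⟩
  · exact (measurable_youngSelection hφ hψ).comp
      ((hν'.comp measurable_fst).prodMk measurable_snd)
  · filter_upwards [hdefect'] with ω' hω'
    exact eq_map_graph_of_diracDefect_eq_zero hφ hψ hψφ (hYoung' ω') hω'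

end YoungMeasure

theorem stmt15_general {m : ℕ} (r : ℝ)
    (Q : Type*) [MetricSpace Q] [SecondCountableTopology Q]
    [MeasurableSpace Q] [BorelSpace Q]
    (lam : Measure Q) [IsProbabilityMeasure lam]
    (E : Set (EuclideanSpace ℝ (Fin m))) (hE : IsClosed E)
    (Ω Ω' : Type*) [MeasurableSpace Ω] [MeasurableSpace Ω']
    (P : Measure Ω) [IsProbabilityMeasure P] (P' : Measure Ω')
    (ν : Ω → ProbabilityMeasure (Q × ↥E)) (ν' : Ω' → ProbabilityMeasure (Q × ↥E))
    [MeasurableSpace (ProbabilityMeasure (Q × ↥E))]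
    [BorelSpace (ProbabilityMeasure (Q × ↥E))]
    (hmeas : Measurable ν) (hmeas' : Measurable ν')
    (hYoung' : ∀ ω, ((ν' ω : Measure (Q × ↥E))).map Prod.fst = lam)
    (hlaw : P.map ν = P'.map ν')
    (hDirac : IsLrRandomDiracMass E lam r P ν) :
    IsLrRandomDiracMass E lam r P' ν' := by
  have : PolishSpace E := hE.polishSpace
  obtain ⟨u, hu, hmoment, hνu⟩ := hDirac
  have : Nonempty E := ⟨u (nonempty_of_isProbabilityMeasure P).some
    (nonempty_of_isProbabilityMeasure lam).some⟩
  obtain ⟨u', hu', hν'u'⟩ := exists_graph_of_map_eq hmeas hmeas' hYoung' hlaw hu hνu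
  refine ⟨u', hu', ?_, hν'u'⟩
  rwa [lintegral_lintegral_eq_of_map_eq hmeas hmeas' hlaw
    (g := fun x => ENNReal.ofReal (‖(x : EuclideanSpace ℝ (Fin m))‖ ^ r)) (by fun_prop)
    hu hνu hu' hν'u']

/-- Being an `L^r`-random Dirac mass depends only on the law of the random Young
measure: if `ν` and `ν'` have the same law and `ν` is an `L^r`-random Dirac mass,
then so is `ν'`. -/
theorem stmt15 {m : ℕ} (r : ℝ) (hr : 1 ≤ r)
    (Q : Type*) [MetricSpace Q] [CompactSpace Q] [SecondCountableTopology Q]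
    [MeasurableSpace Q] [BorelSpace Q]
    (lam : Measure Q) [IsProbabilityMeasure lam]
    (E : Set (EuclideanSpace ℝ (Fin m))) (hE : IsClosed E)
    (Ω Ω' : Type*) [MeasurableSpace Ω] [MeasurableSpace Ω']
    (P : Measure Ω) [IsProbabilityMeasure P] (P' : Measure Ω') [IsProbabilityMeasure P']
    (ν : Ω → ProbabilityMeasure (Q × ↥E)) (ν' : Ω' → ProbabilityMeasure (Q × ↥E))
    [MeasurableSpace (ProbabilityMeasure (Q × ↥E))]
    [BorelSpace (ProbabilityMeasure (Q × ↥E))]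
    (hmeas : Measurable ν) (hmeas' : Measurable ν')
    (hYoung : ∀ ω, ((ν ω : Measure (Q × ↥E))).map Prod.fst = lam)
    (hYoung' : ∀ ω, ((ν' ω : Measure (Q × ↥E))).map Prod.fst = lam)
    (hlaw : P.map ν = P'.map ν')
    (hDirac : IsLrRandomDiracMass E lam r P ν) :
    IsLrRandomDiracMass E lam r P' ν' :=
  stmt15_general r Q lam E hE Ω Ω' P P' ν ν' hmeas hmeas' hYoung' hlaw hDirac
end

section
/- Suppose the functional equation 2λ(⟨χ(v)u⟩⟨χ(v')⟩ − ⟨χ(v)⟩⟨χ(v')u⟩) = (v−v')(⟨χ(v)χ(v')⟩ − ⟨χ(v)⟩⟨χ(v')⟩) holds for all v, v' ∈ ℝ for a probability measure ν on ℝ₊×ℝ of the form ν = μ + α δ_{(ρ̄,ū)} with ρ̄ > 0, where μ is supported in the vacuum region V = {ρ = 0} and α ∈ [0,1]. Then α = 0 or α = 1. -/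
open MeasureTheory

/-- `χ(U,v) = (v - z)₊^λ (w - v)₊^λ` with `z = u - ρ^θ`, `w = u + ρ^θ`, `U = (ρ,u)`. -/
noncomputable def chiFn (θ lam : ℝ) (U : ℝ × ℝ) (v : ℝ) : ℝ :=
  max (v - (U.2 - U.1 ^ θ)) 0 ^ lam * max ((U.2 + U.1 ^ θ) - v) 0 ^ lam

/-! On the vacuum `ρ = 0` the interval `(z, w)` is empty, so `χ` vanishes and `ν` only sees its
atom: every average `⟨f⟩` with `f = 0` on the vacuum equals `α f(ρ̄, ū)`. The functional equation at
two points `v ≠ v'` of `(ū - ρ̄^θ, ū + ρ̄^θ)` then reduces to `(v - v') χ(v) χ(v') α (1 - α) = 0`,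
where all factors but `α (1 - α)` are nonzero. -/

theorem integral_add_smul_dirac_of_ae_eq_zero {X E : Type*} [MeasurableSpace X]
    [MeasurableSingletonClass X] [NormedAddCommGroup E] [NormedSpace ℝ E] [CompleteSpace E]
    {μ : Measure X} {f : X → E} (hf : f =ᵐ[μ] 0) {c : ℝ} (hc : 0 ≤ c) (x : X) :
    ∫ y, f y ∂(μ + ENNReal.ofReal c • Measure.dirac x) = c • f x := by
  have hμ : Integrable f μ := (integrable_zero _ _ _).congr hf.symm
  have hδ : Integrable f (ENNReal.ofReal c • Measure.dirac x) :=
    (integrable_dirac enorm_lt_top).smul_measure ENNReal.ofReal_ne_top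
  rw [integral_add_measure hμ hδ, integral_congr_ae hf, integral_smul_measure, integral_dirac,
    ENNReal.toReal_ofReal hc]
  simp

theorem chiFn_of_fst_eq_zero {θ lam : ℝ} (hθ : 0 < θ) (hlam : 0 < lam) {U : ℝ × ℝ}
    (hU : U.1 = 0) (v : ℝ) : chiFn θ lam U v = 0 := by
  rw [chiFn, hU, Real.zero_rpow hθ.ne', sub_zero, add_zero]
  rcases le_total v U.2 with h | h
  · rw [max_eq_right (by linarith), Real.zero_rpow hlam.ne', zero_mul]
  · rw [max_eq_right (a := U.2 - v) (by linarith), Real.zero_rpow hlam.ne', mul_zero]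

theorem chiFn_pos (θ lam : ℝ) {ρ u v : ℝ} (h₁ : u - ρ ^ θ < v) (h₂ : v < u + ρ ^ θ) :
    0 < chiFn θ lam (ρ, u) v :=
  mul_pos (Real.rpow_pos_of_pos (lt_max_of_lt_left (sub_pos.2 h₁)) _)
    (Real.rpow_pos_of_pos (lt_max_of_lt_left (sub_pos.2 h₂)) _)

theorem ae_fst_eq_zero_of_vacuum {μ : Measure (ℝ × ℝ)} (hvac : μ {U : ℝ × ℝ | U.1 ≠ 0} = 0) :
    ∀ᵐ U ∂μ, U.1 = 0 :=
  measure_eq_zero_iff_ae_notMem.1 hvac |>.mono fun _ hU => not_not.1 hU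

theorem stmt16_general (θ lam : ℝ) (hθ : 0 < θ) (hlam : 0 < lam)
    (μ : Measure (ℝ × ℝ)) (α : ℝ) (hα : α ∈ Set.Icc (0 : ℝ) 1)
    (ρb ub : ℝ) (hρb : 0 < ρb)
    (ν : Measure (ℝ × ℝ))
    (hν : ν = μ + ENNReal.ofReal α • Measure.dirac (ρb, ub))
    (hvac : μ {U : ℝ × ℝ | U.1 ≠ 0} = 0)
    (hfe : ∀ v v' : ℝ,
      2 * lam * ((∫ U, chiFn θ lam U v * U.2 ∂ν) * (∫ U, chiFn θ lam U v' ∂ν) -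
          (∫ U, chiFn θ lam U v ∂ν) * (∫ U, chiFn θ lam U v' * U.2 ∂ν)) =
        (v - v') * ((∫ U, chiFn θ lam U v * chiFn θ lam U v' ∂ν) -
          (∫ U, chiFn θ lam U v ∂ν) * (∫ U, chiFn θ lam U v' ∂ν))) :
    α = 0 ∨ α = 1 := by
  have hvacuum := ae_fst_eq_zero_of_vacuum hvac
  have average {f : ℝ × ℝ → ℝ} (hf : ∀ U : ℝ × ℝ, U.1 = 0 → f U = 0) :
      ∫ U, f U ∂ν = α * f (ρb, ub) :=
    hν ▸ integral_add_smul_dirac_of_ae_eq_zero (hvacuum.mono hf) hα.1 _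
  have chi_vac {U : ℝ × ℝ} (hU : U.1 = 0) (v : ℝ) : chiFn θ lam U v = 0 :=
    chiFn_of_fst_eq_zero hθ hlam hU v
  have hp : 0 < ρb ^ θ := Real.rpow_pos_of_pos hρb θ
  set v' := ub + ρb ^ θ / 2 with hv'
  have hc := chiFn_pos θ lam (ρ := ρb) (u := ub) (v := ub) (by linarith) (by linarith)
  have hc' := chiFn_pos θ lam (ρ := ρb) (u := ub) (v := v') (by linarith) (by linarith)
  have key := hfe ub v'
  rw [average fun U hU => by simp [chi_vac hU], average fun U hU => by simp [chi_vac hU],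
    average fun U hU => by simp [chi_vac hU], average fun U hU => by simp [chi_vac hU],
    average fun U hU => by simp [chi_vac hU]] at key
  have hreduced : ρb ^ θ / 2 * (chiFn θ lam (ρb, ub) ub * chiFn θ lam (ρb, ub) v') *
      (α * (1 - α)) = 0 := by
    linear_combination key
  rcases mul_eq_zero.1 ((mul_eq_zero.1 hreduced).resolve_left (by positivity)) with h | h
  · exact .inl h
  · exact .inr (by linarith)

/-- If the functional equation
`2λ(⟨χ(v)u⟩⟨χ(v')⟩ − ⟨χ(v)⟩⟨χ(v')u⟩) = (v−v')(⟨χ(v)χ(v')⟩ − ⟨χ(v)⟩⟨χ(v')⟩)` holds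
for all `v, v'` for a probability measure `ν = μ + α δ_{(ρ̄,ū)}` with `ρ̄ > 0` and
`μ` supported in the vacuum region `{ρ = 0}`, then `α = 0` or `α = 1`. -/
theorem stmt16 (θ lam : ℝ) (hθ : 0 < θ) (hlam : 0 < lam)
    (μ : Measure (ℝ × ℝ)) (α : ℝ) (hα : α ∈ Set.Icc (0 : ℝ) 1)
    (ρb ub : ℝ) (hρb : 0 < ρb)
    (ν : Measure (ℝ × ℝ))
    (hν : ν = μ + ENNReal.ofReal α • Measure.dirac (ρb, ub))
    (hvac : μ {U : ℝ × ℝ | U.1 ≠ 0} = 0)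
    (hprob : IsProbabilityMeasure ν)
    (hfe : ∀ v v' : ℝ,
      2 * lam * ((∫ U, chiFn θ lam U v * U.2 ∂ν) * (∫ U, chiFn θ lam U v' ∂ν) -
          (∫ U, chiFn θ lam U v ∂ν) * (∫ U, chiFn θ lam U v' * U.2 ∂ν)) =
        (v - v') * ((∫ U, chiFn θ lam U v * chiFn θ lam U v' ∂ν) -
          (∫ U, chiFn θ lam U v ∂ν) * (∫ U, chiFn θ lam U v' ∂ν))) :
    α = 0 ∨ α = 1 :=
  stmt16_general θ lam hθ hlam μ α hα ρb ub hρb ν hν hvac hfe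
end
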